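/- Let d ∈ ℕ and a : Fin d → ℕ with a i ≥ 1 for every i, and let Q be a set of functions Fin d → ℤ such that Q has no a-cover, while for every q ∈ Q the set Q \ {q} has an a-cover. Then Q is finite and its cardinality is at most ∏ i, (a i + 1). -/
import Mathlib

open Polynomial Finset

/-- Alon's covering lemma: if `Q` has no `a`-cover but every proper subset
obtained by deleting a point does, then `|Q| ≤ ∏ (a i + 1)`. -/
theorem alon_covering_lemma (d : ℕ) (a : Fin d → ℕ) (ha : ∀ i, 1 ≤ a i)
    (Q : Set (Fin d → ℤ))
    (hQ : ¬ ∃ b : ∀ i : Fin d, Fin (a i) → ℤ,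
        ∀ q ∈ Q, ∃ (i : Fin d) (j : Fin (a i)), q i = b i j)
    (hQ' : ∀ q ∈ Q, ∃ b : ∀ i : Fin d, Fin (a i) → ℤ,
        ∀ q' ∈ Q \ {q}, ∃ (i : Fin d) (j : Fin (a i)), q' i = b i j) :
    Q.Finite ∧ Q.ncard ≤ ∏ i : Fin d, (a i + 1) := by
  classical
  choose b hb using hQ'
  have hkey : ∀ q (hq : q ∈ Q), ∀ i j, q i ≠ b q hq i j := by
    intro q hq i j h
    exact hQ ⟨b q hq, fun q' hq' => by
      by_cases hqq : q' = q
      · exact ⟨i, j, by rw [hqq, h]⟩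
      · exact hb q hq q' ⟨hq', hqq⟩⟩
  -- the univariate polynomials
  set f : Q → Fin d → ℚ[X] :=
    fun q i => ∏ j : Fin (a i), (X - C ((b q.1 q.2 i j : ℤ) : ℚ)) with hf
  have hdeg : ∀ (q : Q) (i : Fin d), (f q i).natDegree < a i + 1 := by
    intro q i
    have := Polynomial.natDegree_prod_le (univ : Finset (Fin (a i)))
      (fun j => X - C ((b q.1 q.2 i j : ℤ) : ℚ))
    refine lt_of_le_of_lt (this.trans ?_) (Nat.lt_succ_self _)
    calc ∑ j : Fin (a i), (X - C ((b q.1 q.2 i j : ℤ) : ℚ)).natDegree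
        ≤ ∑ _j : Fin (a i), 1 := by
          refine Finset.sum_le_sum fun j _ => ?_
          exact le_of_eq (Polynomial.natDegree_X_sub_C _)
      _ = a i := by simp
  -- the coefficient vectors
  set M := ∀ i : Fin d, Fin (a i + 1) with hM
  set v : Q → (M → ℚ) := fun q m => ∏ i, (f q i).coeff (m i) with hv
  -- evaluation linear functionals
  set E : (Fin d → ℤ) → ((M → ℚ) →ₗ[ℚ] ℚ) :=
    fun x => ∑ m : M, (∏ i, ((x i : ℚ)) ^ (m i : ℕ)) • LinearMap.proj m with hE
  have hEv : ∀ (x : Fin d → ℤ) (q : Q), E x (v q) = ∏ i, (f q i).eval ((x i : ℚ)) := by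
    intro x q
    have : E x (v q) = ∑ m : M, ∏ i, ((f q i).coeff (m i) * (x i : ℚ) ^ (m i : ℕ)) := by
      simp only [hE, LinearMap.sum_apply, LinearMap.smul_apply, LinearMap.proj_apply,
        smul_eq_mul, hv]
      refine Finset.sum_congr rfl fun m _ => ?_
      rw [Finset.prod_mul_distrib]
      ring
    rw [this]
    have hswap : ∑ m : M, ∏ i, ((f q i).coeff (m i) * (x i : ℚ) ^ (m i : ℕ))
        = ∏ i, ∑ k : Fin (a i + 1), ((f q i).coeff k * (x i : ℚ) ^ (k : ℕ)) := by
      rw [Finset.prod_univ_sum]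
      rw [← Fintype.piFinset_univ]
    rw [hswap]
    refine Finset.prod_congr rfl fun i _ => ?_
    rw [Fin.sum_univ_eq_sum_range (fun k => (f q i).coeff k * (x i : ℚ) ^ k)]
    exact (Polynomial.eval_eq_sum_range' (hdeg q i) _).symm
  have hdiag : ∀ q : Q, E q.1 (v q) ≠ 0 := by
    intro q
    rw [hEv]
    refine Finset.prod_ne_zero_iff.2 fun i _ => ?_
    simp only [hf, Polynomial.eval_prod, Polynomial.eval_sub, Polynomial.eval_X,
      Polynomial.eval_C]
    refine Finset.prod_ne_zero_iff.2 fun j _ => ?_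
    intro h
    have : ((q.1 i : ℚ)) = ((b q.1 q.2 i j : ℤ) : ℚ) := by linarith [sub_eq_zero.1 h]
    exact hkey q.1 q.2 i j (by exact_mod_cast this)
  have hoff : ∀ q q' : Q, q' ≠ q → E q'.1 (v q) = 0 := by
    intro q q' hne
    rw [hEv]
    obtain ⟨i, j, hij⟩ := hb q.1 q.2 q'.1 ⟨q'.2, fun h => hne (Subtype.ext h)⟩
    refine Finset.prod_eq_zero (Finset.mem_univ i) ?_
    simp only [hf, Polynomial.eval_prod]
    refine Finset.prod_eq_zero (Finset.mem_univ j) ?_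
    simp [hij]
  have hli : LinearIndependent ℚ v := by
    rw [linearIndependent_iff]
    intro l hl
    ext q
    have h1 := congrArg (E q.1) hl
    rw [Finsupp.linearCombination_apply, map_finsuppSum, map_zero] at h1
    have h2 : (l.sum fun q' c => E q.1 (c • v q')) = l q * E q.1 (v q) := by
      rw [Finsupp.sum_eq_single q]
      · rw [map_smul]; simp [smul_eq_mul]
      · intro q' _ hne
        rw [map_smul, hoff q' q hne.symm]; simp
      · intro _; simp
    rw [h2] at h1
    simpa using (mul_eq_zero.1 h1).resolve_right (hdiag q)
  have hfin : Finite Q := by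
    have : Module.Finite ℚ (M → ℚ) := by infer_instance
    exact hli.finite
  have hQfin : Q.Finite := Set.finite_coe_iff.1 hfin
  refine ⟨hQfin, ?_⟩
  have hcard : Nat.card Q ≤ Module.finrank ℚ (M → ℚ) := by
    haveI : Fintype Q := hQfin.fintype
    simpa [Nat.card_eq_fintype_card] using hli.fintype_card_le_finrank
  have hrank : Module.finrank ℚ (M → ℚ) = ∏ i : Fin d, (a i + 1) := by
    rw [Module.finrank_pi ℚ]
    simp [hM, Fintype.card_pi]
  rw [← Nat.card_coe_set_eq]
  omega
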